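/- arXiv:2603.28039 — 5 statements merged into one kernel-verified Lean document; each statement's English description precedes it below -/
import Mathlib

section
/- Fix a > 0 and c ∈ [−1, 1]. Define g(t) = log(α(t) − β(t)·c) − log D(t), where α(t) = 1 + sinh(at)/a, β(t) = (cosh(at) − 1)/a, D(t) = 1 + (2/a)·sinh(at) + (2/a²)·(cosh(at) − 1), and E(t) = cosh(at) − sinh(at)·c. Then as t → 0 one has g(t) = −(3/2)·t + (1/2)·t² + (1/2)·t·E(t) + O(t³); that is, the function t ↦ g(t) + (3/2)·t − (1/2)·t² − (1/2)·t·E(t) is O(t³) as t → 0. -/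
/-!
From `sinh x = x + O(x³)` and `cosh x = 1 + x²/2 + O(x³)`, the arguments of the two logarithms
are `1 + u` with `u = t - (ac/2)t² + O(t³)` and `u = 2t + t² + O(t³)`. Since
`log (1 + u) = u - u²/2 + O(t³)` when `u = O(t)`, this gives `g(t) = -t + (1 - ac)t²/2 + O(t³)`,
while `t E(t) = t - act² + O(t³)`; the linear and quadratic terms then cancel.
-/

noncomputable section

open Real Asymptotics Filter Topology

lemma isBigO_pow_of_le {m n : ℕ} (h : m ≤ n) :
    (fun t : ℝ => t ^ n) =O[𝓝 0] fun t => t ^ m := by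
  have hbdd := ((continuous_pow (n - m)).tendsto (0 : ℝ)).isBigO_one ℝ
  refine ((isBigO_refl (fun t : ℝ => t ^ m) _).mul hbdd).congr (fun t => ?_) fun t => mul_one _
  rw [← pow_add, Nat.add_sub_cancel' h]

lemma isBigO_pow_comp_const_mul {f : ℝ → ℝ} {n : ℕ} (hf : f =O[𝓝 0] (· ^ n)) (k : ℝ) :
    (fun t => f (k * t)) =O[𝓝 0] (· ^ n) := by
  have hk : Tendsto (fun t : ℝ => k * t) (𝓝 0) (𝓝 0) := by
    simpa using (continuous_const_mul k).tendsto 0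
  exact (hf.comp_tendsto hk).trans
    (((isBigO_refl (· ^ n) _).const_mul_left (k ^ n)).congr_left fun t => (mul_pow k t n).symm)

lemma exp_sub_taylor_isBigO :
    (fun x => exp x - (1 + x + x ^ 2 / 2)) =O[𝓝 0] (· ^ 3) := by
  simpa [Finset.sum_range_succ, add_assoc] using Real.exp_sub_sum_range_isBigO_pow 3

lemma sinh_sub_self_isBigO : (fun x => sinh x - x) =O[𝓝 0] (· ^ 3) := by
  have hneg := isBigO_pow_comp_const_mul exp_sub_taylor_isBigO (-1)
  refine ((exp_sub_taylor_isBigO.sub hneg).const_mul_left (1 / 2)).congr_left fun x => ?_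
  rw [sinh_eq]
  ring_nf

lemma cosh_sub_taylor_isBigO : (fun x => cosh x - (1 + x ^ 2 / 2)) =O[𝓝 0] (· ^ 3) := by
  have hneg := isBigO_pow_comp_const_mul exp_sub_taylor_isBigO (-1)
  refine ((exp_sub_taylor_isBigO.add hneg).const_mul_left (1 / 2)).congr_left fun x => ?_
  rw [cosh_eq]
  ring_nf

lemma log_one_add_sub_taylor_isBigO :
    (fun x => log (1 + x) - (x - x ^ 2 / 2)) =O[𝓝 0] (· ^ 3) := by
  have h := (Complex.log_sub_logTaylor_isBigO 2).comp_tendsto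
    (Complex.continuous_ofReal.tendsto' 0 0 rfl)
  rw [← Complex.isBigO_ofReal_left, ← Complex.isBigO_ofReal_right]
  refine h.congr' ?_ (.of_eq (by ext; simp))
  filter_upwards [eventually_gt_nhds (show (-1 : ℝ) < 0 by norm_num)] with x hx
  norm_num [Complex.logTaylor, Finset.sum_range_succ, neg_div, ← sub_eq_add_neg,
    Complex.ofReal_log (by linarith : (0 : ℝ) ≤ 1 + x)]

lemma log_one_add_sub_quadratic_isBigO {u : ℝ → ℝ} {b₁ b₂ : ℝ}
    (hu : (fun t => u t - (b₁ * t + b₂ * t ^ 2)) =O[𝓝 0] (· ^ 3)) :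
    (fun t => log (1 + u t) - (b₁ * t + (b₂ - b₁ ^ 2 / 2) * t ^ 2)) =O[𝓝 0] (· ^ 3) := by
  set p : ℝ → ℝ := fun t => b₁ * t + b₂ * t ^ 2
  have hp : p =O[𝓝 0] fun t => t ^ 1 :=
    (((isBigO_refl _ _).const_mul_left b₁).add
      ((isBigO_pow_of_le (by norm_num : 1 ≤ 2)).const_mul_left b₂)).congr_left fun t => by simp [p]
  have hu1 : u =O[𝓝 0] fun t => t ^ 1 :=
    ((hu.trans (isBigO_pow_of_le (by norm_num))).add hp).congr_left fun t => sub_add_cancel _ _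
  have ht0 : Tendsto (fun t : ℝ => t ^ 1) (𝓝 0) (𝓝 0) := by
    simpa using (continuous_pow 1).tendsto (0 : ℝ)
  have hu0 := hu1.trans_tendsto ht0
  have hp0 := hp.trans_tendsto ht0
  have hlog : (fun t => log (1 + u t) - (u t - u t ^ 2 / 2)) =O[𝓝 0] (· ^ 3) :=
    (log_one_add_sub_taylor_isBigO.comp_tendsto hu0).trans
      (by simpa [Function.comp_def, ← pow_mul] using hu1.pow 3)
  have hsq : (fun t => u t ^ 2 - p t ^ 2) =O[𝓝 0] (· ^ 3) :=
    (hu.mul ((hu0.add hp0).isBigO_one ℝ)).congr (fun t => by ring) fun t => mul_one _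
  have hp2 : (fun t => p t ^ 2 - b₁ ^ 2 * t ^ 2) =O[𝓝 0] (· ^ 3) :=
    (((isBigO_refl _ _).const_mul_left (2 * b₁ * b₂)).add
      ((isBigO_pow_of_le (by norm_num : 3 ≤ 4)).const_mul_left (b₂ ^ 2))).congr_left
      fun t => by ring
  exact (((hlog.add hu).sub (hsq.const_mul_left (1 / 2))).sub
    (hp2.const_mul_left (1 / 2))).congr_left fun t => by ring

theorem stmt_7_general (a c : ℝ) (ha : 0 < a)
    (E g : ℝ → ℝ)
    (hE : ∀ t : ℝ, E t = Real.cosh (a * t) - Real.sinh (a * t) * c)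
    (hg : ∀ t : ℝ, g t =
      Real.log ((1 + Real.sinh (a * t) / a) - ((Real.cosh (a * t) - 1) / a) * c) -
      Real.log (1 + (2 / a) * Real.sinh (a * t) + (2 / a ^ 2) * (Real.cosh (a * t) - 1))) :
    (fun t : ℝ => g t + (3 / 2) * t - (1 / 2) * t ^ 2 - (1 / 2) * t * E t)
      =O[nhds 0] fun t : ℝ => t ^ 3 := by
  have ha0 : a ≠ 0 := ha.ne'
  have hS := isBigO_pow_comp_const_mul sinh_sub_self_isBigO a
  have hC := isBigO_pow_comp_const_mul cosh_sub_taylor_isBigO a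
  have hlogN := log_one_add_sub_quadratic_isBigO (b₁ := 1) (b₂ := -(a * c / 2))
    (u := fun t => sinh (a * t) / a - (cosh (a * t) - 1) / a * c)
    (((hS.const_mul_left (1 / a)).sub (hC.const_mul_left (c / a))).congr_left fun t => by
      field_simp; ring)
  have hlogD := log_one_add_sub_quadratic_isBigO (b₁ := 2) (b₂ := 1)
    (u := fun t => (2 / a) * sinh (a * t) + (2 / a ^ 2) * (cosh (a * t) - 1))
    (((hS.const_mul_left (2 / a)).add (hC.const_mul_left (2 / a ^ 2))).congr_left fun t => by
      field_simp; ring)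
  have hE2 : (fun t => E t - (1 - a * c * t)) =O[𝓝 0] (· ^ 2) :=
    (((hC.trans (isBigO_pow_of_le (by norm_num))).add
      ((isBigO_refl _ _).const_mul_left (a ^ 2 / 2))).sub
      ((hS.trans (isBigO_pow_of_le (by norm_num))).const_mul_left c)).congr_left fun t => by
        rw [hE]; ring
  have htE : (fun t => t * (E t - (1 - a * c * t))) =O[𝓝 0] (· ^ 3) :=
    ((isBigO_refl (fun t : ℝ => t) _).mul hE2).congr_right fun t => by ring
  refine ((hlogN.sub hlogD).sub (htE.const_mul_left (1 / 2))).congr_left fun t => ?_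
  rw [hg, add_sub_assoc 1, add_assoc 1]
  ring

theorem stmt_7 (a c : ℝ) (ha : 0 < a) (hc : c ∈ Set.Icc (-1 : ℝ) 1)
    (E g : ℝ → ℝ)
    (hE : ∀ t : ℝ, E t = Real.cosh (a * t) - Real.sinh (a * t) * c)
    (hg : ∀ t : ℝ, g t =
      Real.log ((1 + Real.sinh (a * t) / a) - ((Real.cosh (a * t) - 1) / a) * c) -
      Real.log (1 + (2 / a) * Real.sinh (a * t) + (2 / a ^ 2) * (Real.cosh (a * t) - 1))) :
    (fun t : ℝ => g t + (3 / 2) * t - (1 / 2) * t ^ 2 - (1 / 2) * t * E t)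
      =O[nhds 0] fun t : ℝ => t ^ 3 :=
  stmt_7_general a c ha E g hE hg
end
end

section
/- Let κ > 0, β > 0, and c ∈ [−1, 1]. Define R(η) = √(κ² + β²·sinh²η + 2κβ·sinh η·c) and the reduced free energy F(η) = β·cosh η − log I₀(R(η)) + log I₀(κ). Then as η → 0, F(η) = β − β·(I₁(κ)/I₀(κ))·η·c + O(η²); that is, the function η ↦ F(η) − β + β·(I₁(κ)/I₀(κ))·η·c is O(η²) as η → 0. -/
noncomputable section

open Real

/-- The modified Bessel function of the first kind `I₀`. -/
def besselI0 (x : ℝ) : ℝ := (1 / (2 * π)) * ∫ θ in (0:ℝ)..(2 * π), Real.exp (x * Real.cos θ)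

/-- The modified Bessel function of the first kind `I₁`. -/
def besselI1 (x : ℝ) : ℝ :=
  (1 / (2 * π)) * ∫ θ in (0:ℝ)..(2 * π), Real.exp (x * Real.cos θ) * Real.cos θ

/-! Both `F` and the linear correction are smooth near `η = 0`, so it suffices that the
correction kills the value and the first derivative of `F - β` at `0`; a `C²` function with
vanishing value and derivative is `O(η²)` by the mean value theorem. The derivative of
`log I₀` is `I₁ / I₀` (differentiate under the integral sign), and `R` has derivative `β c`
at `0` with `R 0 = κ`, so the chain rule gives `F'(0) = -β (I₁(κ)/I₀(κ)) c`. -/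

open Topology
open scoped ContDiff

section

variable {E : Type*} [NormedAddCommGroup E] [NormedSpace ℝ E]

theorem isBigO_pow_succ_of_hasDerivAt {f f' : ℝ → E} {x₀ : ℝ} {n : ℕ}
    (hf : ∀ᶠ x in 𝓝 x₀, HasDerivAt f (f' x) x) (hf₀ : f x₀ = 0) (hf' : f' =O[𝓝 x₀] fun x => (x - x₀) ^ n) :
    f =O[𝓝 x₀] fun x => (x - x₀) ^ (n + 1) := by
  obtain ⟨C, hC₀, hC⟩ := hf'.exists_nonneg
  obtain ⟨ε, hε, hball⟩ := Metric.eventually_nhds_iff_ball.mp (hf.and hC.bound)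
  refine .of_bound C (Metric.eventually_nhds_iff_ball.mpr ⟨ε, hε, fun x hx => ?_⟩)
  have hsub : Metric.closedBall x₀ (dist x x₀) ⊆ Metric.ball x₀ ε :=
    Metric.closedBall_subset_ball hx
  have hmvt := Convex.norm_image_sub_le_of_norm_hasDerivWithin_le
    (f := f) (f' := f') (C := C * dist x x₀ ^ n) (s := Metric.closedBall x₀ (dist x x₀))
    (fun t ht => (hball t (hsub ht)).1.hasDerivWithinAt) (fun t ht => ?_)
    (convex_closedBall _ _) (Metric.mem_closedBall_self dist_nonneg) (Metric.mem_closedBall.2 le_rfl)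
  · rw [hf₀, sub_zero] at hmvt
    rw [norm_pow, pow_succ, ← mul_assoc, Real.norm_eq_abs, ← Real.dist_eq]
    simpa [Real.dist_eq] using hmvt
  · calc ‖f' t‖ ≤ C * ‖(t - x₀) ^ n‖ := (hball t (hsub ht)).2
      _ ≤ C * dist x x₀ ^ n := by
        rw [norm_pow, Real.norm_eq_abs, ← Real.dist_eq]
        gcongr
        exact Metric.mem_closedBall.1 ht

theorem ContDiffAt.isBigO_sub_sq {f : ℝ → E} {x₀ : ℝ} (hf : ContDiffAt ℝ 2 f x₀)
    (hf₀ : f x₀ = 0) (hf'₀ : deriv f x₀ = 0) :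
    f =O[𝓝 x₀] fun x => (x - x₀) ^ 2 := by
  have hderiv : ∀ᶠ x in 𝓝 x₀, HasDerivAt f (deriv f x) x :=
    (hf.eventually (by simp)).mono fun x hx => (hx.differentiableAt (by simp)).hasDerivAt
  have hf'' : DifferentiableAt ℝ (deriv f) x₀ :=
    (hf.derivWithin (m := 1) (by norm_num)).differentiableAt (by simp)
  refine isBigO_pow_succ_of_hasDerivAt hderiv hf₀ ?_
  simpa [hf'₀] using hf''.isBigO_sub

end

def expCosMoment (n : ℕ) (x : ℝ) : ℝ :=
  ∫ θ in (0:ℝ)..(2 * π), exp (x * cos θ) * cos θ ^ n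

theorem hasDerivAt_expCosMoment (n : ℕ) (x : ℝ) :
    HasDerivAt (expCosMoment n) (expCosMoment (n + 1) x) x := by
  have hcont : ∀ m : ℕ, ∀ y : ℝ, Continuous fun θ => exp (y * cos θ) * cos θ ^ m := by
    intro m y; fun_prop
  refine (intervalIntegral.hasDerivAt_integral_of_dominated_loc_of_deriv_le
    (F' := fun y θ => exp (y * cos θ) * cos θ ^ (n + 1))
    (bound := fun _ => exp (|x| + 1)) (Metric.ball_mem_nhds x one_pos)
    (.of_forall fun y => (hcont n y).aestronglyMeasurable) ((hcont n x).intervalIntegrable _ _)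
    (hcont (n + 1) x).aestronglyMeasurable (.of_forall fun θ _ y hy => ?_)
    intervalIntegrable_const (.of_forall fun θ _ y _ => ?_)).2
  · have hy : |y| ≤ |x| + 1 := by
      rw [Metric.mem_ball, Real.dist_eq] at hy
      linarith [abs_sub_abs_le_abs_sub y x]
    have hcos := abs_cos_le_one θ
    calc ‖exp (y * cos θ) * cos θ ^ (n + 1)‖ = exp (y * cos θ) * |cos θ| ^ (n + 1) := by
          rw [norm_mul, norm_pow, norm_of_nonneg (exp_pos _).le, Real.norm_eq_abs]
      _ ≤ exp (|x| + 1) * 1 := by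
          gcongr
          · calc y * cos θ ≤ |y| * |cos θ| := (le_abs_self _).trans (abs_mul _ _).le
              _ ≤ (|x| + 1) * 1 := by gcongr
              _ = |x| + 1 := mul_one _
          · exact pow_le_one₀ (abs_nonneg _) hcos
      _ = exp (|x| + 1) := mul_one _
  · exact ((hasDerivAt_mul_const (cos θ)).exp.mul_const (cos θ ^ n)).congr_deriv (by ring)

theorem contDiff_expCosMoment (n : ℕ) : ContDiff ℝ ∞ (expCosMoment n) := by
  suffices ∀ k m : ℕ, ContDiff ℝ k (expCosMoment m) from contDiff_infty.2 fun k => this k n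
  intro k
  induction k with
  | zero =>
    exact fun m => contDiff_zero.2 <| continuous_iff_continuousAt.2 fun x =>
      (hasDerivAt_expCosMoment m x).continuousAt
  | succ k ih =>
    intro m
    have hderiv : deriv (expCosMoment m) = expCosMoment (m + 1) :=
      funext fun x => (hasDerivAt_expCosMoment m x).deriv
    rw [Nat.cast_succ, contDiff_succ_iff_deriv, hderiv]
    exact ⟨fun x => (hasDerivAt_expCosMoment m x).differentiableAt, by simp, ih (m + 1)⟩

theorem besselI0_eq_expCosMoment : besselI0 = fun x => 1 / (2 * π) * expCosMoment 0 x := by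
  ext x; simp [besselI0, expCosMoment]

theorem besselI1_eq_expCosMoment (x : ℝ) : besselI1 x = 1 / (2 * π) * expCosMoment 1 x := by
  simp [besselI1, expCosMoment]

theorem hasDerivAt_besselI0 (x : ℝ) : HasDerivAt besselI0 (besselI1 x) x := by
  rw [besselI0_eq_expCosMoment, besselI1_eq_expCosMoment]
  exact (hasDerivAt_expCosMoment 0 x).const_mul _

theorem contDiff_besselI0 : ContDiff ℝ ∞ besselI0 := by
  rw [besselI0_eq_expCosMoment]
  exact contDiff_const.mul (contDiff_expCosMoment 0)

theorem besselI0_pos (x : ℝ) : 0 < besselI0 x := by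
  refine mul_pos (by positivity) (intervalIntegral.intervalIntegral_pos_of_pos_on ?_
    (fun θ _ => exp_pos _) (by positivity))
  exact (by fun_prop : Continuous fun θ => exp (x * cos θ)).intervalIntegrable _ _

theorem hasDerivAt_log_besselI0 (x : ℝ) :
    HasDerivAt (fun y => log (besselI0 y)) (besselI1 x / besselI0 x) x :=
  (hasDerivAt_besselI0 x).log (besselI0_pos x).ne'

/-- `R(η) = ‖κ n₀ + β sinh η q̂‖` for unit vectors with `⟪n₀, q̂⟫ = c`. -/
def boostRadius (κ β c η : ℝ) : ℝ :=
  √(κ ^ 2 + β ^ 2 * sinh η ^ 2 + 2 * κ * β * sinh η * c)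

theorem boostRadius_zero {κ : ℝ} (hκ : 0 ≤ κ) (β c : ℝ) : boostRadius κ β c 0 = κ := by
  simp [boostRadius, sqrt_sq hκ]

theorem contDiffAt_boostRadius_zero {κ : ℝ} (hκ : 0 < κ) (β c : ℝ) {n : WithTop ℕ∞} :
    ContDiffAt ℝ n (boostRadius κ β c) 0 :=
  ContDiffAt.sqrt (by fun_prop) (by simp [hκ.ne'])

theorem hasDerivAt_boostRadius_zero {κ : ℝ} (hκ : 0 < κ) (β c : ℝ) :
    HasDerivAt (boostRadius κ β c) (β * c) 0 := by
  have hradicand : HasDerivAt (fun η => κ ^ 2 + β ^ 2 * sinh η ^ 2 + 2 * κ * β * sinh η * c)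
      (2 * κ * β * c) 0 :=
    ((((hasDerivAt_sinh 0).pow 2).const_mul (β ^ 2)).const_add (κ ^ 2) |>.add
      (((hasDerivAt_sinh 0).const_mul (2 * κ * β)).mul_const c)).congr_deriv (by simp)
  refine (hradicand.sqrt (by simp [hκ.ne'])).congr_deriv ?_
  simp only [sinh_zero]
  rw [show κ ^ 2 + β ^ 2 * 0 ^ 2 + 2 * κ * β * 0 * c = κ ^ 2 by ring, sqrt_sq hκ.le]
  field_simp

theorem stmt_11_general (κ β c : ℝ) (hκ : 0 < κ)
    (R F : ℝ → ℝ)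
    (hR : ∀ η : ℝ, R η = Real.sqrt (κ ^ 2 + β ^ 2 * Real.sinh η ^ 2 +
      2 * κ * β * Real.sinh η * c))
    (hF : ∀ η : ℝ, F η =
      β * Real.cosh η - Real.log (besselI0 (R η)) + Real.log (besselI0 κ)) :
    (fun η : ℝ => F η - β + β * (besselI1 κ / besselI0 κ) * η * c)
      =O[nhds 0] fun η : ℝ => η ^ 2 := by
  obtain rfl : R = boostRadius κ β c := funext hR
  obtain rfl : F = fun η =>
      β * cosh η - log (besselI0 (boostRadius κ β c η)) + log (besselI0 κ) := funext hF
  set q := besselI1 κ / besselI0 κ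
  have hR₀ := boostRadius_zero hκ.le β c
  have hlogI0_smooth : ContDiffAt ℝ 2 (fun η => log (besselI0 (boostRadius κ β c η))) 0 :=
    ((contDiff_besselI0.of_le ENat.LEInfty.out).contDiffAt.comp 0
      (contDiffAt_boostRadius_zero hκ β c)).log (besselI0_pos _).ne'
  have hlogI0_deriv :
      HasDerivAt (fun η => log (besselI0 (boostRadius κ β c η))) (q * (β * c)) 0 := by
    have h := (hasDerivAt_log_besselI0 _).comp 0 (hasDerivAt_boostRadius_zero hκ β c)
    rwa [hR₀] at h
  have hderiv : HasDerivAt (fun η => β * cosh η - log (besselI0 (boostRadius κ β c η)) +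
      log (besselI0 κ) - β + β * q * η * c) 0 0 :=
    ((((hasDerivAt_cosh 0).const_mul β).sub hlogI0_deriv).add_const _ |>.sub_const _ |>.add
      ((hasDerivAt_id 0).const_mul (β * q) |>.mul_const c)).congr_deriv (by simp; ring)
  simpa using ContDiffAt.isBigO_sub_sq (by fun_prop) (by simp [hR₀]) hderiv.deriv

theorem stmt_11 (κ β c : ℝ) (hκ : 0 < κ) (hβ : 0 < β) (hc : c ∈ Set.Icc (-1 : ℝ) 1)
    (R F : ℝ → ℝ)
    (hR : ∀ η : ℝ, R η = Real.sqrt (κ ^ 2 + β ^ 2 * Real.sinh η ^ 2 +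
      2 * κ * β * Real.sinh η * c))
    (hF : ∀ η : ℝ, F η =
      β * Real.cosh η - Real.log (besselI0 (R η)) + Real.log (besselI0 κ)) :
    (fun η : ℝ => F η - β + β * (besselI1 κ / besselI0 κ) * η * c)
      =O[nhds 0] fun η : ℝ => η ^ 2 :=
  stmt_11_general κ β c hκ R F hR hF
end
end

section
/- Let κ > 0, β > 0, and c ∈ (0, 1]. Let F(η) = β·cosh η − log I₀(R(η)) + log I₀(κ) with R(η) = √(κ² + β²·sinh²η + 2κβ·sinh η·c), and for η > 0 set h(η) = 2·√(β⁻¹·(I₁(κ)/I₀(κ))·η·c). Then as η → 0⁺, F(η) = β − log I₀(β·h(η)) + O(η²); that is, the function η ↦ F(η) − β + log I₀(β·h(η)) is O(η²) as η → 0⁺. In other words, after tuning the field strength h(η), the photon free energy agrees with β plus the rotor free energy F_rot(h(η), β) = −log I₀(β·h(η)) up to O(η²). -/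
noncomputable section

open Real

/-!
Expanding `exp (x cos θ)` and integrating term by term against the Wallis integrals
`∫₀^{2π} cos^n` gives `I₀(x) = J₀(x²/4)` and `I₁(x) = (x/2) J₁(x²/4)` for the entire functions
`J_k(t) = ∑ tⁿ / (n! (n+k)!)` (`besselSeries k`), which satisfy `J₀' = J₁`. Since
`R(η)² = κ² + β² sinh² η + 2κβc sinh η =: Q(η)` and `(β h(η))² / 4 = β m c η` with
`m = I₁(κ)/I₀(κ)`, the square roots disappear: for `η > 0` the function in question equals
`G(η) = β cosh η - log J₀(Q(η)/4) + log J₀(κ²/4) - β + log J₀(β m c η)`,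
which is analytic at `0`. Clearly `G(0) = 0`, and
`G'(0) = -(J₁/J₀)(κ²/4) · κβc/2 + β m c = 0` because `m = (κ/2) (J₁/J₀)(κ²/4)`.
An analytic function vanishing to first order at `0` is `O(η²)`.
-/

open Filter Topology
open scoped Nat

theorem integral_cos_pow_add_two_two_pi (n : ℕ) :
    ∫ θ in (0:ℝ)..2 * π, cos θ ^ (n + 2) =
      (n + 1) / (n + 2) * ∫ θ in (0:ℝ)..2 * π, cos θ ^ n := by
  simp [integral_cos_pow]

theorem integral_cos_pow_odd_two_pi (m : ℕ) : ∫ θ in (0:ℝ)..2 * π, cos θ ^ (2 * m + 1) = 0 := by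
  induction m with
  | zero => simp [integral_cos]
  | succ m ih => rw [show 2 * (m + 1) + 1 = 2 * m + 1 + 2 by ring,
      integral_cos_pow_add_two_two_pi, ih, mul_zero]

theorem integral_cos_pow_even_two_pi (m : ℕ) :
    ∫ θ in (0:ℝ)..2 * π, cos θ ^ (2 * m) = 2 * π * (2 * m)! / (4 ^ m * m ! ^ 2) := by
  induction m with
  | zero => simp
  | succ m ih =>
    rw [show 2 * (m + 1) = 2 * m + 2 by ring, integral_cos_pow_add_two_two_pi, ih,
      Nat.factorial_succ, Nat.factorial_succ, Nat.factorial_succ]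
    push_cast
    field_simp
    ring

theorem hasSum_integral_exp_mul_cos_mul_cos_pow (x : ℝ) (k : ℕ) :
    HasSum (fun n : ℕ => x ^ n / n ! * ∫ θ in (0:ℝ)..2 * π, cos θ ^ (n + k))
      (∫ θ in (0:ℝ)..2 * π, exp (x * cos θ) * cos θ ^ k) := by
  simp_rw [← intervalIntegral.integral_const_mul]
  refine intervalIntegral.hasSum_integral_of_dominated_convergence (fun n _ => |x| ^ n / n !)
    (fun n => by fun_prop) (fun n => .of_forall fun θ _ => ?_)
    (.of_forall fun θ _ => Real.summable_pow_div_factorial |x|) intervalIntegrable_const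
    (.of_forall fun θ _ => ?_)
  · rw [norm_mul, norm_div, norm_pow, norm_pow, Real.norm_natCast]
    exact mul_le_of_le_one_right (by positivity)
      (pow_le_one₀ (norm_nonneg _) (abs_cos_le_one θ))
  · have hexp : HasSum (fun n : ℕ => (x * cos θ) ^ n / n !) (exp (x * cos θ)) := by
      rw [exp_eq_exp_ℝ]
      exact NormedSpace.expSeries_div_hasSum_exp _
    have hterm : (fun n : ℕ => x ^ n / n ! * cos θ ^ (n + k)) =
        fun n : ℕ => (x * cos θ) ^ n / n ! * cos θ ^ k := by
      funext n
      ring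
    rw [hterm]
    exact hexp.mul_right _

theorem hasSum_even_iff_of_odd_eq_zero {M : Type*} [AddCommMonoid M] [TopologicalSpace M]
    {f : ℕ → M} {a : M} (hf : ∀ m, f (2 * m + 1) = 0) :
    HasSum (fun m => f (2 * m)) a ↔ HasSum f a := by
  refine (mul_right_injective₀ two_ne_zero).hasSum_iff fun n hn => ?_
  obtain ⟨m, rfl | rfl⟩ := Nat.even_or_odd' n
  · exact absurd ⟨m, rfl⟩ hn
  · exact hf m

theorem hasSum_odd_iff_of_even_eq_zero {M : Type*} [AddCommMonoid M] [TopologicalSpace M]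
    {f : ℕ → M} {a : M} (hf : ∀ m, f (2 * m) = 0) :
    HasSum (fun m => f (2 * m + 1)) a ↔ HasSum f a := by
  refine Function.Injective.hasSum_iff (g := fun m => 2 * m + 1)
    (fun _ _ h => by simp only at h; omega) fun n hn => ?_
  obtain ⟨m, rfl | rfl⟩ := Nat.even_or_odd' n
  · exact hf m
  · exact absurd ⟨m, rfl⟩ hn

def besselSeries (k : ℕ) (t : ℝ) : ℝ := ∑' n : ℕ, t ^ n / (n ! * (n + k)!)

theorem besselI0_eq_besselSeries (x : ℝ) : besselI0 x = besselSeries 0 (x ^ 2 / 4) := by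
  have h := hasSum_integral_exp_mul_cos_mul_cos_pow x 0
  simp only [add_zero, pow_zero, mul_one] at h
  rw [← hasSum_even_iff_of_odd_eq_zero fun m => by rw [integral_cos_pow_odd_two_pi, mul_zero]] at h
  refine (HasSum.tsum_eq ?_).symm
  rw [besselI0]
  refine (h.mul_left (1 / (2 * π))).congr_fun fun m => ?_
  rw [integral_cos_pow_even_two_pi, div_pow, ← pow_mul, add_zero]
  field_simp

theorem besselI1_eq_besselSeries (x : ℝ) : besselI1 x = x / 2 * besselSeries 1 (x ^ 2 / 4) := by
  have h := hasSum_integral_exp_mul_cos_mul_cos_pow x 1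
  simp only [pow_one] at h
  rw [← hasSum_odd_iff_of_even_eq_zero fun m => by rw [integral_cos_pow_odd_two_pi, mul_zero]] at h
  rw [besselSeries, ← tsum_mul_left]
  refine (HasSum.tsum_eq ?_).symm
  rw [besselI1]
  refine (h.mul_left (1 / (2 * π))).congr_fun fun m => ?_
  rw [show 2 * m + 1 + 1 = 2 * (m + 1) by ring, integral_cos_pow_even_two_pi,
    show 2 * (m + 1) = 2 * m + 1 + 1 by ring, Nat.factorial_succ (2 * m + 1), Nat.factorial_succ m,
    div_pow, ← pow_mul]
  push_cast
  field_simp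
  ring

theorem abs_pow_div_factorial_mul_factorial_le (k n : ℕ) (t : ℝ) :
    |t ^ n / (n ! * (n + k)!)| ≤ |t| ^ n / n ! := by
  have hfac : (1 : ℝ) ≤ (n + k)! := Nat.one_le_cast.mpr (Nat.factorial_pos _)
  rw [abs_div, abs_pow, abs_of_pos (by positivity : (0 : ℝ) < n ! * (n + k)!)]
  gcongr
  exact le_mul_of_one_le_right (by positivity) hfac

theorem summable_besselSeries (k : ℕ) (t : ℝ) :
    Summable fun n : ℕ => t ^ n / (n ! * (n + k)!) :=
  .of_norm_bounded (Real.summable_pow_div_factorial |t|)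
    fun n => abs_pow_div_factorial_mul_factorial_le k n t

theorem besselSeries_apply_zero (k : ℕ) : besselSeries k 0 = (k ! : ℝ)⁻¹ := by
  rw [besselSeries, tsum_eq_single 0 fun n hn => by simp [hn]]
  simp

theorem besselSeries_pos (k : ℕ) {t : ℝ} (ht : 0 ≤ t) : 0 < besselSeries k t :=
  (summable_besselSeries k t).tsum_pos (fun n => by positivity) 0 (by simp [Nat.factorial_pos])

theorem hasDerivAt_besselSeries (k : ℕ) (t : ℝ) :
    HasDerivAt (besselSeries k) (besselSeries (k + 1) t) t := by
  -- after splitting off the constant term, the derivative of the `n`-th term is exactly the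
  -- `n`-th term of `besselSeries (k + 1)`
  have hshift : besselSeries k =
      fun s : ℝ => (k ! : ℝ)⁻¹ + ∑' n : ℕ, s ^ (n + 1) / ((n + 1)! * (n + 1 + k)! : ℝ) := by
    funext s
    rw [besselSeries, (summable_besselSeries k s).tsum_eq_zero_add]
    simp
  have hterms : HasDerivAt (fun s : ℝ => ∑' n : ℕ, s ^ (n + 1) / ((n + 1)! * (n + 1 + k)! : ℝ))
      (∑' n : ℕ, t ^ n / (n ! * (n + (k + 1))! : ℝ)) t := by
    refine hasDerivAt_tsum_of_isPreconnected (y₀ := 0)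
      (g := fun n s => s ^ (n + 1) / ((n + 1)! * (n + 1 + k)! : ℝ))
      (g' := fun n s => s ^ n / (n ! * (n + (k + 1))! : ℝ))
      (Real.summable_pow_div_factorial (|t| + 1))
      Metric.isOpen_ball (convex_ball (0 : ℝ) (|t| + 1)).isPreconnected
      (fun n y _ => ?_) (fun n y hy => ?_) (Metric.mem_ball_self (by positivity))
      ?_ (by simp)
    · refine ((hasDerivAt_pow (n + 1) y).div_const ((n + 1)! * (n + 1 + k)! : ℝ)).congr_deriv ?_
      rw [show n + 1 + k = n + (k + 1) by ring, Nat.factorial_succ n]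
      push_cast
      field_simp
    · rw [mem_ball_zero_iff, Real.norm_eq_abs] at hy
      calc ‖y ^ n / (n ! * (n + (k + 1))! : ℝ)‖ ≤ |y| ^ n / n ! :=
            abs_pow_div_factorial_mul_factorial_le (k + 1) n y
        _ ≤ (|t| + 1) ^ n / n ! := by gcongr
    · simp
  rw [hshift]
  exact hterms.const_add _

@[fun_prop]
theorem analyticAt_besselSeries (k : ℕ) (t : ℝ) : AnalyticAt ℝ (besselSeries k) t := by
  set p := FormalMultilinearSeries.ofScalars ℝ fun n => ((n ! * (n + k)! : ℕ) : ℝ)⁻¹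
  have hp : p.radius = ⊤ := p.radius_eq_top_of_summable_norm fun r => by
    simpa [p, FormalMultilinearSeries.ofScalars_norm, div_eq_inv_mul] using
      summable_besselSeries k r
  have hsum : p.sum = besselSeries k := by
    funext s
    simp only [p, besselSeries, FormalMultilinearSeries.sum, FormalMultilinearSeries.ofScalars_apply_eq]
    simp [div_eq_inv_mul]
  rw [← hsum]
  exact (p.hasFPowerSeriesOnBall (hp ▸ ENNReal.zero_lt_top)).analyticAt_of_mem (by simp [hp])

theorem AnalyticAt.isBigO_sub_sub_smul {𝕜 E : Type*} [NontriviallyNormedField 𝕜]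
    [NormedAddCommGroup E] [NormedSpace 𝕜 E] {f : 𝕜 → E} {f' : E} {x : 𝕜}
    (hf : AnalyticAt 𝕜 f x) (hf' : HasDerivAt f f' x) :
    (fun y => f y - f x - (y - x) • f') =O[𝓝 x] fun y => (y - x) ^ 2 := by
  obtain ⟨p, hp⟩ := hf
  have hderiv : p 1 (fun _ => 1) = f' := hp.hasDerivAt.unique hf'
  have hvalue : p.coeff 0 = f x := hp.coeff_zero 1
  have hpartial (z : 𝕜) : p.partialSum 2 z = f x + z • f' := by
    simp [FormalMultilinearSeries.partialSum, Finset.sum_range_succ, ← hderiv, hvalue]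
  have h := (hp.isBigO_sub_partialSum_pow 2).comp_tendsto
    (tendsto_sub_nhds_zero_iff.2 (tendsto_id (x := 𝓝 x)))
  simp only [Function.comp_def, id_eq, add_sub_cancel, hpartial, ← norm_pow] at h
  exact Asymptotics.isBigO_norm_right.mp (h.congr_left fun y => (sub_sub _ _ _).symm)

theorem hasDerivAt_log_besselSeries_zero {t : ℝ} (ht : 0 ≤ t) :
    HasDerivAt (fun s => log (besselSeries 0 s)) (besselSeries 1 t / besselSeries 0 t) t :=
  (hasDerivAt_besselSeries 0 t).log (besselSeries_pos 0 ht).ne'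

section FreeEnergyGap

variable (κ β c : ℝ)

def freeEnergyGap (η : ℝ) : ℝ :=
  β * cosh η - log (besselSeries 0 ((κ ^ 2 + β ^ 2 * sinh η ^ 2 + 2 * κ * β * sinh η * c) / 4)) +
    log (besselI0 κ) - β + log (besselSeries 0 (β * (besselI1 κ / besselI0 κ) * c * η))

theorem freeEnergyGap_zero : freeEnergyGap κ β c 0 = 0 := by
  simp [freeEnergyGap, besselI0_eq_besselSeries κ, besselSeries_apply_zero]

theorem analyticAt_freeEnergyGap : AnalyticAt ℝ (freeEnergyGap κ β c) 0 := by
  unfold freeEnergyGap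
  fun_prop (disch := (apply besselSeries_pos; simp <;> positivity))

theorem hasDerivAt_freeEnergyGap : HasDerivAt (freeEnergyGap κ β c) 0 0 := by
  set m := besselI1 κ / besselI0 κ
  have hQ : HasDerivAt (fun η => (κ ^ 2 + β ^ 2 * sinh η ^ 2 + 2 * κ * β * sinh η * c) / 4)
      (κ * β * c / 2) 0 := by
    have hs : HasDerivAt sinh 1 0 := by simpa using hasDerivAt_sinh 0
    have := (((hs.fun_pow 2).const_mul (β ^ 2)).const_add (κ ^ 2)).fun_add
      ((hs.const_mul (2 * κ * β)).mul_const c) |>.div_const 4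
    exact this.congr_deriv (by norm_num; ring)
  have hlin : HasDerivAt (fun η : ℝ => β * m * c * η) (β * m * c) 0 := by
    simpa using (hasDerivAt_id (0 : ℝ)).const_mul (β * m * c)
  have hderiv := (((hasDerivAt_cosh 0).const_mul β).sub
    ((hasDerivAt_log_besselSeries_zero (by positivity : 0 ≤ κ ^ 2 / 4)).comp_of_eq 0 hQ (by simp))
    |>.add_const (log (besselI0 κ)) |>.sub_const β).add
    ((hasDerivAt_log_besselSeries_zero le_rfl).comp_of_eq 0 hlin (by simp))
  refine hderiv.congr_deriv ?_
  simp [m, besselI0_eq_besselSeries, besselI1_eq_besselSeries, besselSeries_apply_zero]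
  field_simp
  ring

theorem isBigO_freeEnergyGap : freeEnergyGap κ β c =O[𝓝 0] fun η => η ^ 2 := by
  simpa [freeEnergyGap_zero] using
    (analyticAt_freeEnergyGap κ β c).isBigO_sub_sub_smul (hasDerivAt_freeEnergyGap κ β c)

end FreeEnergyGap

theorem besselI1_div_besselI0_nonneg {κ : ℝ} (hκ : 0 ≤ κ) : 0 ≤ besselI1 κ / besselI0 κ := by
  rw [besselI0_eq_besselSeries, besselI1_eq_besselSeries]
  have := besselSeries_pos 0 (by positivity : 0 ≤ κ ^ 2 / 4)
  have := besselSeries_pos 1 (by positivity : 0 ≤ κ ^ 2 / 4)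
  positivity

theorem stmt_13 (κ β c : ℝ) (hκ : 0 < κ) (hβ : 0 < β) (hc : c ∈ Set.Ioc (0 : ℝ) 1)
    (R F h : ℝ → ℝ)
    (hR : ∀ η : ℝ, R η = Real.sqrt (κ ^ 2 + β ^ 2 * Real.sinh η ^ 2 +
      2 * κ * β * Real.sinh η * c))
    (hF : ∀ η : ℝ, F η =
      β * Real.cosh η - Real.log (besselI0 (R η)) + Real.log (besselI0 κ))
    (hh : ∀ η : ℝ, h η = 2 * Real.sqrt (β⁻¹ * (besselI1 κ / besselI0 κ) * η * c)) :
    (fun η : ℝ => F η - β + Real.log (besselI0 (β * h η)))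
      =O[nhdsWithin 0 (Set.Ioi 0)] fun η : ℝ => η ^ 2 := by
  obtain ⟨hc, -⟩ := hc
  have hm := besselI1_div_besselI0_nonneg hκ.le
  refine ((isBigO_freeEnergyGap κ β c).mono nhdsWithin_le_nhds).congr' ?_ .rfl
  filter_upwards [self_mem_nhdsWithin] with η (hη : 0 < η)
  set m := besselI1 κ / besselI0 κ
  have hQ : 0 ≤ κ ^ 2 + β ^ 2 * sinh η ^ 2 + 2 * κ * β * sinh η * c := by positivity
  have ha : 0 ≤ β⁻¹ * m * η * c := by positivity
  have hsq : (β * (2 * √(β⁻¹ * m * η * c))) ^ 2 / 4 = β * m * c * η := by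
    rw [mul_pow, mul_pow, sq_sqrt ha]
    field_simp
    ring
  rw [hF, besselI0_eq_besselSeries (R η), besselI0_eq_besselSeries (β * h η), hR, hh, sq_sqrt hQ,
    hsq, freeEnergyGap]
end
end

section
/- Let a > 0 and p ∈ ℝ. A point w = (x, y) in the open unit disk (x² + y² < 1) satisfies the system (1 − (x² + y²))/((x − 1)² + y²) = a and 2y/((x − 1)² + y²) = p if and only if x = (a² + p² − 1)/((1 + a)² + p²) and y = 2p/((1 + a)² + p²). In particular, the system has a unique solution in the disk, given by the explicit formulas, and then (x − 1)² + y² = 4/((1 + a)² + p²). -/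
noncomputable section

theorem stmt_16 (a p : ℝ) (ha : 0 < a) :
    (∀ x y : ℝ, x ^ 2 + y ^ 2 < 1 →
      (((1 - (x ^ 2 + y ^ 2)) / ((x - 1) ^ 2 + y ^ 2) = a ∧
        2 * y / ((x - 1) ^ 2 + y ^ 2) = p) ↔
       (x = (a ^ 2 + p ^ 2 - 1) / ((1 + a) ^ 2 + p ^ 2) ∧
        y = 2 * p / ((1 + a) ^ 2 + p ^ 2)))) ∧
    ((a ^ 2 + p ^ 2 - 1) / ((1 + a) ^ 2 + p ^ 2) - 1) ^ 2 +
        (2 * p / ((1 + a) ^ 2 + p ^ 2)) ^ 2 = 4 / ((1 + a) ^ 2 + p ^ 2) := by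
  have hD : (0 : ℝ) < (1 + a) ^ 2 + p ^ 2 := by positivity
  constructor
  · intro x y hxy
    have hd : 0 < (x - 1) ^ 2 + y ^ 2 := by
      rcases eq_or_ne x 1 with rfl | hx
      · nlinarith [sq_nonneg y]
      · have h1 : 0 < (x - 1) ^ 2 := by
          have : x - 1 ≠ 0 := sub_ne_zero.mpr hx
          positivity
        nlinarith [sq_nonneg y]
    constructor
    · rintro ⟨h1, h2⟩
      rw [div_eq_iff hd.ne'] at h1 h2
      have key : ((x - 1) ^ 2 + y ^ 2) *
          (((x - 1) ^ 2 + y ^ 2) * ((1 + a) ^ 2 + p ^ 2) - 4) = 0 := by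
        linear_combination (-(2 * ((x - 1) ^ 2 + y ^ 2) + a * ((x - 1) ^ 2 + y ^ 2) +
            (1 - (x ^ 2 + y ^ 2)))) * h1 + (-(p * ((x - 1) ^ 2 + y ^ 2) + 2 * y)) * h2
      have hd4 : ((x - 1) ^ 2 + y ^ 2) * ((1 + a) ^ 2 + p ^ 2) = 4 := by
        rcases mul_eq_zero.mp key with h | h
        · exact absurd h hd.ne'
        · linarith
      have h2x : 2 * x = 2 - ((x - 1) ^ 2 + y ^ 2) - a * ((x - 1) ^ 2 + y ^ 2) := by
        linear_combination -h1
      constructor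
      · rw [eq_div_iff hD.ne']
        linear_combination ((1 + a) ^ 2 + p ^ 2) / 2 * h2x - (1 + a) / 2 * hd4
      · rw [eq_div_iff hD.ne']
        linear_combination ((1 + a) ^ 2 + p ^ 2) / 2 * h2 + p / 2 * hd4
    · rintro ⟨hx, hy⟩
      subst hx hy
      constructor <;> rw [div_eq_iff hd.ne']
      · field_simp
        ring
      · field_simp
        ring
  · field_simp
    ring
end
end

section
/- Fix a > 0 and c ∈ [−1, 1]. For η ≠ 0 define f(η) = g(η/a)/η, where g(t) = log(α(t) − β(t)·c) − log D(t) with α(t) = 1 + sinh(at)/a, β(t) = (cosh(at) − 1)/a, and D(t) = 1 + (2/a)·sinh(at) + (2/a²)·(cosh(at) − 1). Then as η → 0, f(η) = −3/(2a) + η/(2a²) + (1/(2a))·(cosh η − sinh η·c) + O(η²); that is, the function η ↦ f(η) + 3/(2a) − η/(2a²) − (1/(2a))·(cosh η − sinh η·c) is O(η²) as η → 0. In particular, the coefficient of the energy E = cosh η − sinh η·c in f at η = 0 is β_eff = 1/(2a), the effective inverse temperature. -/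
/-!
Multiplying by `η`, the claim is that
`R η = g (η / a) + 3 η / (2a) - η² / (2a²) - η (cosh η - c sinh η) / (2a)` is `O(η³)`.
After the substitution `t = η / a` both arguments of the logarithms in `g` are affine
combinations of `1`, `cosh η` and `sinh η`, so `R` is smooth near `0`, and a direct computation
gives `R 0 = R' 0 = R'' 0 = 0`. Since `R''` is differentiable at `0`, it is `O(η)`, and two
applications of the mean value theorem lift this to `R' = O(η²)` and `R = O(η³)`.
-/

open Real Filter Asymptotics Topology

noncomputable section

theorem Asymptotics.isBigO_sub_pow_succ_of_hasDerivAt {𝕜 G : Type*} [RCLike 𝕜]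
    [NormedAddCommGroup G] [NormedSpace 𝕜 G] {f f' : 𝕜 → G} {x₀ : 𝕜} {n : ℕ}
    (hf : ∀ᶠ x in 𝓝 x₀, HasDerivAt f (f' x) x) (hf' : f' =O[𝓝 x₀] fun x => (x - x₀) ^ n) :
    (fun x => f x - f x₀) =O[𝓝 x₀] fun x => (x - x₀) ^ (n + 1) := by
  obtain ⟨C, hC, hCf'⟩ := hf'.exists_pos
  obtain ⟨δ, hδ, hball⟩ := Metric.eventually_nhds_iff_ball.mp (hf.and hCf'.bound)
  refine IsBigO.of_bound C ?_
  filter_upwards [Metric.ball_mem_nhds x₀ hδ] with x hx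
  set r := ‖x - x₀‖
  have hsub : Metric.closedBall x₀ r ⊆ Metric.ball x₀ δ :=
    Metric.closedBall_subset_ball (by rwa [Metric.mem_ball, dist_eq_norm] at hx)
  have hbound : ∀ y ∈ Metric.closedBall x₀ r, ‖f' y‖ ≤ C * r ^ n := fun y hy => by
    refine (hball y (hsub hy)).2.trans ?_
    rw [norm_pow]
    gcongr
    rwa [Metric.mem_closedBall, dist_eq_norm] at hy
  have hmvt := (convex_closedBall x₀ r).norm_image_sub_le_of_norm_hasDerivWithin_le
    (fun y hy => (hball y (hsub hy)).1.hasDerivWithinAt) hbound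
    (Metric.mem_closedBall_self (norm_nonneg _)) (y := x) (by simp [r, dist_eq_norm])
  simpa [r, pow_succ, mul_assoc] using hmvt

def hypComb (r p q x : ℝ) : ℝ := r + p * cosh x + q * sinh x

@[simp]
theorem hypComb_zero (r p q : ℝ) : hypComb r p q 0 = r + p := by
  simp [hypComb]

theorem hasDerivAt_hypComb (r p q x : ℝ) : HasDerivAt (hypComb r p q) (hypComb 0 q p x) x := by
  refine ((((hasDerivAt_cosh x).const_mul p).const_add r).add
    ((hasDerivAt_sinh x).const_mul q)).congr_deriv ?_
  simp only [hypComb]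
  ring

@[fun_prop]
theorem differentiable_hypComb (r p q : ℝ) : Differentiable ℝ (hypComb r p q) :=
  fun x => (hasDerivAt_hypComb r p q x).differentiableAt

theorem hasDerivAt_logDeriv_hypComb {r p q x : ℝ} (h : hypComb r p q x ≠ 0) :
    HasDerivAt (fun y => hypComb 0 q p y / hypComb r p q y)
      ((hypComb 0 p q x * hypComb r p q x - hypComb 0 q p x ^ 2) / hypComb r p q x ^ 2) x := by
  refine ((hasDerivAt_hypComb 0 q p x).div (hasDerivAt_hypComb r p q x) h).congr_deriv ?_
  simp only [hypComb]
  ring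

namespace AcceleratedObserver

def energy (c : ℝ) : ℝ → ℝ := hypComb 0 1 (-c)

def numerator (a c : ℝ) : ℝ → ℝ := hypComb (1 + c / a) (-(c / a)) (1 / a)

def normalization (a : ℝ) : ℝ → ℝ := hypComb (1 - 2 / a ^ 2) (2 / a ^ 2) (2 / a)

def remainder (a c η : ℝ) : ℝ :=
  log (numerator a c η) - log (normalization a η) + 3 * η / (2 * a) - η ^ 2 / (2 * a ^ 2) -
    η * energy c η / (2 * a)

def remainderDeriv (a c η : ℝ) : ℝ :=
  hypComb 0 (1 / a) (-(c / a)) η / numerator a c η -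
    hypComb 0 (2 / a) (2 / a ^ 2) η / normalization a η + 3 / (2 * a) - η / a ^ 2 -
    (energy c η + η * hypComb 0 (-c) 1 η) / (2 * a)

def remainderDeriv2 (a c η : ℝ) : ℝ :=
  (hypComb 0 (-(c / a)) (1 / a) η * numerator a c η - hypComb 0 (1 / a) (-(c / a)) η ^ 2) /
      numerator a c η ^ 2 -
    (hypComb 0 (2 / a ^ 2) (2 / a) η * normalization a η - hypComb 0 (2 / a) (2 / a ^ 2) η ^ 2) /
      normalization a η ^ 2 - 1 / a ^ 2 -
    (2 * hypComb 0 (-c) 1 η + η * energy c η) / (2 * a)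

variable {a c η : ℝ}

theorem energy_apply : energy c η = cosh η - sinh η * c := by
  simp only [energy, hypComb]
  ring

theorem numerator_apply (ha : a ≠ 0) :
    numerator a c η = 1 + sinh η / a - (cosh η - 1) / a * c := by
  simp only [numerator, hypComb]
  field_simp
  ring

theorem normalization_apply (ha : a ≠ 0) :
    normalization a η = 1 + 2 / a * sinh η + 2 / a ^ 2 * (cosh η - 1) := by
  simp only [normalization, hypComb]
  field_simp
  ring

theorem numerator_zero : numerator a c 0 = 1 := by
  simp [numerator]

theorem normalization_zero : normalization a 0 = 1 := by
  simp [normalization]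

theorem hasDerivAt_remainder (hA : numerator a c η ≠ 0) (hD : normalization a η ≠ 0) :
    HasDerivAt (remainder a c) (remainderDeriv a c η) η := by
  refine ((((((hasDerivAt_hypComb _ _ _ η).log hA).sub ((hasDerivAt_hypComb _ _ _ η).log hD)).add
    (((hasDerivAt_id η).const_mul 3).div_const (2 * a))).sub
    ((hasDerivAt_pow 2 η).div_const (2 * a ^ 2))).sub
    (((hasDerivAt_id η).mul (hasDerivAt_hypComb 0 1 (-c) η)).div_const (2 * a))).congr_deriv ?_
  simp only [remainderDeriv, energy, numerator, normalization, id]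
  push_cast
  ring

theorem hasDerivAt_remainderDeriv (hA : numerator a c η ≠ 0) (hD : normalization a η ≠ 0) :
    HasDerivAt (remainderDeriv a c) (remainderDeriv2 a c η) η := by
  refine (((((hasDerivAt_logDeriv_hypComb hA).sub (hasDerivAt_logDeriv_hypComb hD)).add_const
    (3 / (2 * a))).sub ((hasDerivAt_id η).div_const (a ^ 2))).sub
    (((hasDerivAt_hypComb 0 1 (-c) η).add
      ((hasDerivAt_id η).mul (hasDerivAt_hypComb 0 (-c) 1 η))).div_const (2 * a))).congr_deriv ?_
  simp only [remainderDeriv2, energy, numerator, normalization, id]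
  ring

theorem differentiableAt_remainderDeriv2 (a c : ℝ) :
    DifferentiableAt ℝ (remainderDeriv2 a c) 0 := by
  unfold remainderDeriv2 energy numerator normalization
  fun_prop (disch := simp)

theorem remainder_zero : remainder a c 0 = 0 := by
  simp [remainder, numerator_zero, normalization_zero]

theorem remainderDeriv_zero (ha : a ≠ 0) : remainderDeriv a c 0 = 0 := by
  simp only [remainderDeriv, energy, numerator_zero, normalization_zero, hypComb_zero]
  field_simp
  ring

theorem remainderDeriv2_zero (ha : a ≠ 0) : remainderDeriv2 a c 0 = 0 := by
  simp only [remainderDeriv2, energy, numerator_zero, normalization_zero, hypComb_zero]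
  field_simp
  ring

theorem remainder_isBigO_cube (ha : a ≠ 0) : remainder a c =O[𝓝 0] fun η => η ^ 3 := by
  have hne : ∀ᶠ η in 𝓝 0, numerator a c η ≠ 0 ∧ normalization a η ≠ 0 :=
    ((differentiable_hypComb _ _ _).continuous.continuousAt.eventually_ne
      (by simp)).and
    ((differentiable_hypComb _ _ _).continuous.continuousAt.eventually_ne
      (by simp))
  have h2 : remainderDeriv2 a c =O[𝓝 0] fun η => (η - 0) ^ 1 := by
    simpa [remainderDeriv2_zero ha] using
      (differentiableAt_remainderDeriv2 a c).hasDerivAt.isBigO_sub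
  have h1 : remainderDeriv a c =O[𝓝 0] fun η => (η - 0) ^ 2 := by
    simpa [remainderDeriv_zero ha] using isBigO_sub_pow_succ_of_hasDerivAt
      (hne.mono fun η h => hasDerivAt_remainderDeriv h.1 h.2) h2
  simpa [remainder_zero] using isBigO_sub_pow_succ_of_hasDerivAt
    (hne.mono fun η h => hasDerivAt_remainder h.1 h.2) h1

end AcceleratedObserver

end

open AcceleratedObserver in
theorem stmt_19_general (a c : ℝ) (ha : 0 < a)
    (g f : ℝ → ℝ)
    (hg : ∀ t : ℝ, g t =
      Real.log ((1 + Real.sinh (a * t) / a) - ((Real.cosh (a * t) - 1) / a) * c) -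
      Real.log (1 + (2 / a) * Real.sinh (a * t) + (2 / a ^ 2) * (Real.cosh (a * t) - 1)))
    (hf : ∀ η : ℝ, η ≠ 0 → f η = g (η / a) / η) :
    (fun η : ℝ => f η + 3 / (2 * a) - η / (2 * a ^ 2) -
        (1 / (2 * a)) * (Real.cosh η - Real.sinh η * c))
      =O[nhdsWithin 0 {(0 : ℝ)}ᶜ] fun η : ℝ => η ^ 2 := by
  have hrem : ∀ η ≠ 0, remainder a c η * η⁻¹ = f η + 3 / (2 * a) - η / (2 * a ^ 2) -
      (1 / (2 * a)) * (Real.cosh η - Real.sinh η * c) := by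
    intro η hη
    rw [hf η hη, hg, mul_div_cancel₀ η ha.ne', remainder, numerator_apply ha.ne',
      normalization_apply ha.ne', energy_apply]
    field_simp
  refine (((remainder_isBigO_cube (c := c) ha.ne').mono nhdsWithin_le_nhds).mul
    (isBigO_refl (fun η : ℝ => η⁻¹) _)).congr' ?_ ?_
  · filter_upwards [self_mem_nhdsWithin] with η hη using hrem η hη
  · filter_upwards [self_mem_nhdsWithin] with η hη
    field_simp [hη]

theorem stmt_19 (a c : ℝ) (ha : 0 < a) (hc : c ∈ Set.Icc (-1 : ℝ) 1)
    (g f : ℝ → ℝ)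
    (hg : ∀ t : ℝ, g t =
      Real.log ((1 + Real.sinh (a * t) / a) - ((Real.cosh (a * t) - 1) / a) * c) -
      Real.log (1 + (2 / a) * Real.sinh (a * t) + (2 / a ^ 2) * (Real.cosh (a * t) - 1)))
    (hf : ∀ η : ℝ, η ≠ 0 → f η = g (η / a) / η) :
    (fun η : ℝ => f η + 3 / (2 * a) - η / (2 * a ^ 2) -
        (1 / (2 * a)) * (Real.cosh η - Real.sinh η * c))
      =O[nhdsWithin 0 {(0 : ℝ)}ᶜ] fun η : ℝ => η ^ 2 :=
  stmt_19_general a c ha g f hg hf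
end
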